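/- The map Υ from CES to CNF translates generalized let as left substitution: for all M, P in CES, Υ(LET y:=M in P) = ⟨ΥM\y⟩(ΥP). -/
import Mathlib


namespace Paper

mutual
/-- Terms of the continuation-enclosing style calculus CES. -/
inductive CeTm : Type
| val : CeVal → CeTm
| lett : String → CeVal → CeVal → CeTm → CeTm   -- let x := V W in M
/-- Values of CES. -/
inductive CeVal : Type
| var : String → CeVal
| lam : String → CeTm → CeVal
end

mutual
def CeVal.sub (V : CeVal) (x : String) : CeVal → CeVal
| .var z => if z = x then V else .var z
| .lam z M => if z = x then .lam z M else .lam z (CeTm.sub V x M)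
def CeTm.sub (V : CeVal) (x : String) : CeTm → CeTm
| .val W => .val (CeVal.sub V x W)
| .lett y A B M =>
    .lett y (CeVal.sub V x A) (CeVal.sub V x B) (if y = x then M else CeTm.sub V x M)
end

/-- The generalized let `LET y := M in P` of CES (integrating a let_v-step). -/
def LETce (y : String) : CeTm → CeTm → CeTm
| .val V, P => CeTm.sub V y P
| .lett x A B N, P => .lett x A B (LETce y N P)

mutual
/-- One-step reduction of CES (rule βv), closed under all contexts. -/
inductive CeStep : CeTm → CeTm → Prop
| betav {y x M V P} :
    CeStep (.lett y (.lam x M) V P) (LETce y (CeTm.sub V x M) P)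
| valC {V V'} : CeStepV V V' → CeStep (.val V) (.val V')
| lett1 {y A A' B M} : CeStepV A A' → CeStep (.lett y A B M) (.lett y A' B M)
| lett2 {y A B B' M} : CeStepV B B' → CeStep (.lett y A B M) (.lett y A B' M)
| lett3 {y A B M M'} : CeStep M M' → CeStep (.lett y A B M) (.lett y A B M')
/-- One-step reduction of CES values. -/
inductive CeStepV : CeVal → CeVal → Prop
| lamC {x M M'} : CeStep M M' → CeStepV (.lam x M) (.lam x M')
end

mutual
/-- Commutative normal forms of the call-by-value λ-calculus with generalized
applications (terms). -/
inductive GTm : Type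
| val : GVal → GTm
| gapp : GVal → GVal → String → GTm → GTm        -- V(W, x.P)
/-- Values of CNF. -/
inductive GVal : Type
| var : String → GVal
| lam : String → GTm → GVal
end

mutual
def GVal.sub (V : GVal) (x : String) : GVal → GVal
| .var z => if z = x then V else .var z
| .lam z M => if z = x then .lam z M else .lam z (GTm.sub V x M)
def GTm.sub (V : GVal) (x : String) : GTm → GTm
| .val W => .val (GVal.sub V x W)
| .gapp A B y M =>
    .gapp (GVal.sub V x A) (GVal.sub V x B) y (if y = x then M else GTm.sub V x M)
end

/-- Left substitution ⟨N\x⟩P in CNF. -/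
def lsub : GTm → String → GTm → GTm
| .val V, x, P => GTm.sub V x P
| .gapp V W y N, x, P => .gapp V W y (lsub N x P)

mutual
/-- One-step reduction of CNF (rule βv), closed under all contexts. -/
inductive GStep : GTm → GTm → Prop
| betav {y M W x P} :
    GStep (.gapp (.lam y M) W x P) (lsub (GTm.sub W y M) x P)
| valC {V V'} : GStepV V V' → GStep (.val V) (.val V')
| gapp1 {V V' W x P} : GStepV V V' → GStep (.gapp V W x P) (.gapp V' W x P)
| gapp2 {V W W' x P} : GStepV W W' → GStep (.gapp V W x P) (.gapp V W' x P)
| gapp3 {V W x P P'} : GStep P P' → GStep (.gapp V W x P) (.gapp V W x P')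
/-- One-step reduction of CNF values. -/
inductive GStepV : GVal → GVal → Prop
| lamC {x M M'} : GStep M M' → GStepV (.lam x M) (.lam x M')
end

mutual
/-- The map Υ from CES to CNF (values). -/
def upsV : CeVal → GVal
| .var x => .var x
| .lam x M => .lam x (upsT M)
/-- The map Υ from CES to CNF (terms). -/
def upsT : CeTm → GTm
| .val V => .val (upsV V)
| .lett x A B M => .gapp (upsV A) (upsV B) x (upsT M)
end

mutual
/-- The map Φ from CNF to CES (values). -/
def phiV : GVal → CeVal
| .var x => .var x
| .lam x M => .lam x (phiT M)
/-- The map Φ from CNF to CES (terms). -/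
def phiT : GTm → CeTm
| .val V => .val (phiV V)
| .gapp V W x M => .lett x (phiV V) (phiV W) (phiT M)
end

mutual
theorem upsV_sub (V : CeVal) (x : String) :
    ∀ W : CeVal, upsV (CeVal.sub V x W) = GVal.sub (upsV V) x (upsV W)
| .var z => by simp [CeVal.sub, GVal.sub, upsV]; split <;> simp [upsV]
| .lam z M => by
  simp [CeVal.sub, GVal.sub, upsV]; split <;> simp [upsV, upsT_sub V x M]
theorem upsT_sub (V : CeVal) (x : String) :
    ∀ M : CeTm, upsT (CeTm.sub V x M) = GTm.sub (upsV V) x (upsT M)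
| .val W => by simp [CeTm.sub, GTm.sub, upsT, upsV_sub]
| .lett y A B M => by
  simp [CeTm.sub, GTm.sub, upsT, upsV_sub]
  split <;> simp [upsT, upsT_sub V x M]
end

/-- Υ translates the generalized let of CES as left substitution. -/
theorem stmt18 (y : String) (M P : CeTm) :
    upsT (LETce y M P) = lsub (upsT M) y (upsT P) := by
  match M with
  | .val V => simp [LETce, lsub, upsT, upsT_sub]
  | .lett x A B N => simp [LETce, lsub, upsT, stmt18 y N P]

end Paper
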